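/- arXiv:2504.21595 — 4 statements merged into one kernel-verified Lean document; each statement's English description precedes it below -/
import Mathlib

section
/- Let Y_1,…,Y_t be exchangeable real-valued random variables that are almost surely pairwise distinct, and let 1 ≤ T_0 < t. For each s with T_0 < s ≤ t, define the reduced sequential rank R̃_s := 1 + #{j ≤ T_0 : Y_j < Y_s} ∈ {1,…,T_0+1}. Then, almost surely, for every i ∈ {1,…,T_0+1}, P(R̃_t = i | R̃_{T_0+1},…,R̃_{t−1}) = (1 + #{s : T_0 < s ≤ t−1, R̃_s = i}) / t. In particular, at t = T_0+1 the reduced rank R̃_{T_0+1} is uniform on {1,…,T_0+1}. -/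
open MeasureTheory ProbabilityTheory
open scoped ENNReal NNReal

/-- A finite family of random elements is exchangeable if its joint law is invariant under
every permutation of the index set. -/
def Exchangeable {Ω ι α : Type*} [MeasurableSpace Ω] [MeasurableSpace α]
    (P : Measure Ω) (X : ι → Ω → α) : Prop :=
  ∀ π : Equiv.Perm ι,
    Measure.map (fun ω => fun i => X (π i) ω) P = Measure.map (fun ω => fun i => X i ω) P

/-!
Almost surely the observations `Y_0, …, Y_{t-1}` realise a strict order pattern, which is a
permutation `σ` of `Fin t` (`Y_j < Y_{j'} ↔ σ j < σ j'`), and by exchangeability all `t!`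
patterns are equally likely. Reduced ranks only depend on the pattern, so the conditional
probability reduces to counting permutations.

Every permutation `σ` is obtained uniquely by taking a permutation `σ₀` fixing the last index
and inserting the last observation at rank `k = σ (t-1)` while keeping the relative order of
the others. The insertion changes none of the earlier reduced ranks, and the new reduced rank
is `i` exactly when `k` lies in the `i`-th gap between the ranks of the pre-treatment values.
Reindexing `k = σ₀ s`, these `k` correspond to the indices `s` with reduced rank `i` under
`σ₀`: exactly one pre-treatment index (or the last index itself when `i = T0 + 1`), plus the
earlier post-treatment indices of reduced rank `i`. So `1 + #{…}` of the `t` insertions give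
reduced rank `i`.
-/

open Finset Equiv Function

theorem condExp_comap_ae_eq_comp {Ω β E : Type*} {mΩ : MeasurableSpace Ω} [MeasurableSpace β]
    [Countable β] [MeasurableSingletonClass β] [NormedAddCommGroup E] [NormedSpace ℝ E]
    [CompleteSpace E] {P : Measure Ω} [IsFiniteMeasure P] {G : Ω → β} (hG : Measurable G)
    {f : Ω → E} {g : β → E} {C : ℝ} (hf : Integrable f P) (hgC : ∀ b, ‖g b‖ ≤ C)
    (hfib : ∀ b, P.real (G ⁻¹' {b}) • g b = ∫ ω in G ⁻¹' {b}, f ω ∂P) :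
    P[f | MeasurableSpace.comap G inferInstance] =ᵐ[P] g ∘ G := by
  have hgG := StronglyMeasurable.of_discrete.comp_measurable (comap_measurable G) (f := g)
  have hg : Integrable (g ∘ G) P :=
    .of_bound (hgG.mono hG.comap_le).aestronglyMeasurable C (ae_of_all _ fun ω => hgC (G ω))
  refine (ae_eq_condExp_of_forall_setIntegral_eq hG.comap_le hf (fun _ _ _ => hg.integrableOn)
    ?_ hgG.aestronglyMeasurable).symm
  rintro _ ⟨B, -, rfl⟩ -
  have hB : G ⁻¹' B = ⋃ b : B, G ⁻¹' {b.1} := by ext; simp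
  have hmeas (b : B) : MeasurableSet (G ⁻¹' {b.1}) := hG (measurableSet_singleton _)
  have hdisj : Pairwise (Disjoint on fun b : B => G ⁻¹' {b.1}) := fun b b' hne =>
    (Set.disjoint_singleton.2 (Subtype.coe_injective.ne hne)).preimage G
  rw [hB, integral_iUnion hmeas hdisj hg.integrableOn, integral_iUnion hmeas hdisj hf.integrableOn]
  refine tsum_congr fun b => ?_
  rw [← hfib, ← setIntegral_const]
  exact setIntegral_congr_fun (hmeas b) fun ω hω => congrArg g hω

theorem Exchangeable.measure_comp_perm_preimage {Ω ι α : Type*} [MeasurableSpace Ω]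
    [MeasurableSpace α] {P : Measure Ω} {X : ι → Ω → α} (h : Exchangeable P X)
    (hX : ∀ i, Measurable (X i)) (π : Perm ι) {B : Set (ι → α)} (hB : MeasurableSet B) :
    P ((fun ω i => X (π i) ω) ⁻¹' B) = P ((fun ω i => X i ω) ⁻¹' B) := by
  rw [← Measure.map_apply (measurable_pi_lambda _ fun i => hX (π i)) hB,
    ← Measure.map_apply (measurable_pi_lambda _ hX) hB, h π]

theorem Finset.card_filter_card_filter_lt_eq_one {ι α : Type*} [LinearOrder α] {x : ι → α}
    {A : Finset ι} (hx : Set.InjOn x A) {r : ℕ} (hr : r < #A) :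
    #{a ∈ A | #{b ∈ A | x b < x a} = r} = 1 := by
  set rank := fun a => #{b ∈ A | x b < x a}
  have rank_lt (a) (ha : a ∈ A) : rank a < #A :=
    card_lt_card (filter_ssubset.2 ⟨a, ha, lt_irrefl _⟩)
  have rank_lt_rank (a) (ha : a ∈ A) (b) (hb : b ∈ A) (hab : x a < x b) : rank a < rank b := by
    refine card_lt_card ((ssubset_iff_of_subset fun c hc => ?_).2 ⟨a, ?_, ?_⟩)
    · simp only [mem_filter] at hc ⊢
      exact ⟨hc.1, hc.2.trans hab⟩
    · simp [ha, hab]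
    · simp
  have rank_injOn : Set.InjOn rank A := by
    intro a ha b hb hab
    by_contra hne
    rcases (hx.ne ha hb hne).lt_or_gt with h | h
    · exact (rank_lt_rank a ha b hb h).ne hab
    · exact (rank_lt_rank b hb a ha h).ne' hab
  have himage : A.image rank = range #A := by
    refine eq_of_subset_of_card_le (fun r hr => ?_) ?_
    · obtain ⟨a, ha, rfl⟩ := mem_image.1 hr
      exact mem_range.2 (rank_lt a ha)
    · rw [card_range, card_image_of_injOn rank_injOn]
  obtain ⟨a, ha, rfl⟩ := mem_image.1 (himage ▸ mem_range.2 hr)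
  refine card_eq_one.2 ⟨a, eq_singleton_iff_unique_mem.2 ⟨mem_filter.2 ⟨ha, rfl⟩, ?_⟩⟩
  exact fun b hb => rank_injOn (mem_filter.1 hb).1 ha (mem_filter.1 hb).2

theorem Finset.card_filter_subtype {α : Type*} [Fintype α] (p q : α → Prop) [DecidablePred p]
    [DecidablePred q] : #{x : Subtype p | q x} = #{x | p x ∧ q x} := by
  simp only [← Fintype.card_subtype]
  exact Fintype.card_congr (Equiv.subtypeSubtypeEquivSubtypeInter p q)

namespace SequentialRank

section ReducedRank

variable {m : ℕ}

def reducedRank {α : Type*} [LinearOrder α] (T0 : ℕ) (x : Fin m → α) (s : Fin m) : ℕ :=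
  1 + #{j : Fin m | (j : ℕ) < T0 ∧ x j < x s}

theorem reducedRank_congr {α β : Type*} [LinearOrder α] [LinearOrder β] {T0 : ℕ}
    {x : Fin m → α} {y : Fin m → β} {s s' : Fin m}
    (h : ∀ j : Fin m, (j : ℕ) < T0 → (x j < x s ↔ y j < y s')) :
    reducedRank T0 x s = reducedRank T0 y s' := by
  unfold reducedRank
  congr 2
  exact filter_congr fun j _ => and_congr_right (h j)

theorem measurable_reducedRank (T0 : ℕ) (s : Fin m) :
    Measurable fun x : Fin m → ℝ => reducedRank T0 x s := by
  simp only [reducedRank, card_filter]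
  refine measurable_const.add (Finset.measurable_sum _ fun j _ => Measurable.ite ?_
    measurable_const measurable_const)
  exact (MeasurableSet.const _).inter
    (measurableSet_lt (measurable_pi_apply j) (measurable_pi_apply s))

end ReducedRank

section Insertion

variable {n T0 : ℕ}

/-- The rank permutation moving the top rank `last n` to `k` and shifting the ranks `≥ k` up. -/
def insertLast (k : Fin (n + 1)) : Perm (Fin (n + 1)) :=
  (finSuccEquiv' (Fin.last n)).trans (finSuccEquiv' k).symm

@[simp] theorem insertLast_last (k : Fin (n + 1)) : insertLast k (Fin.last n) = k := by
  simp [insertLast]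

@[simp] theorem insertLast_castSucc (k : Fin (n + 1)) (j : Fin n) :
    insertLast k j.castSucc = k.succAbove j := by
  simp [insertLast, finSuccEquiv'_last_apply_castSucc]

theorem insertLast_lt_insertLast_iff (k : Fin (n + 1)) {x y : Fin (n + 1)}
    (hx : x ≠ Fin.last n) (hy : y ≠ Fin.last n) :
    insertLast k x < insertLast k y ↔ x < y := by
  obtain ⟨x, rfl⟩ := Fin.exists_castSucc_eq.2 hx
  obtain ⟨y, rfl⟩ := Fin.exists_castSucc_eq.2 hy
  simp [Fin.succAbove_lt_succAbove_iff]

theorem insertLast_lt_self_iff (k : Fin (n + 1)) {x : Fin (n + 1)} (hx : x ≠ Fin.last n) :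
    insertLast k x < k ↔ x < k := by
  obtain ⟨x, rfl⟩ := Fin.exists_castSucc_eq.2 hx
  simp [Fin.succAbove_lt_iff_castSucc_lt]

abbrev LastStabilizer (n : ℕ) := {σ : Perm (Fin (n + 1)) // σ (Fin.last n) = Fin.last n}

def permEquivInsertLast : Perm (Fin (n + 1)) ≃ Fin (n + 1) × LastStabilizer n where
  toFun σ := (σ (Fin.last n), ⟨(insertLast (σ (Fin.last n)))⁻¹ * σ,
    by simp [Perm.inv_def, Equiv.symm_apply_eq]⟩)
  invFun p := insertLast p.1 * p.2
  left_inv σ := by simp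
  right_inv := fun ⟨k, σ₀, hσ₀⟩ => by simp [hσ₀]

theorem card_filter_perm_eq_sum (p : Perm (Fin (n + 1)) → Prop) [DecidablePred p] :
    #{σ | p σ} = ∑ σ₀ : LastStabilizer n, #{k | p (insertLast k * σ₀.1)} := by
  simp only [card_filter]
  rw [← permEquivInsertLast.symm.sum_comp, Fintype.sum_prod_type_right]
  rfl

theorem reducedRank_insertLast_mul_of_ne_last {σ₀ : Perm (Fin (n + 1))}
    (hσ₀ : σ₀ (Fin.last n) = Fin.last n) (hT0 : T0 ≤ n) (k : Fin (n + 1)) {s : Fin (n + 1)}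
    (hs : s ≠ Fin.last n) : reducedRank T0 (insertLast k * σ₀) s = reducedRank T0 σ₀ s := by
  have hne {x} (hx : x ≠ Fin.last n) : σ₀ x ≠ Fin.last n := fun h =>
    hx (σ₀.injective (h.trans hσ₀.symm))
  refine reducedRank_congr fun j hj => insertLast_lt_insertLast_iff k (hne ?_) (hne hs)
  exact Fin.ne_of_val_ne (by simp; omega)

theorem reducedRank_insertLast_mul_last {σ₀ : Perm (Fin (n + 1))}
    (hσ₀ : σ₀ (Fin.last n) = Fin.last n) (hT0 : T0 ≤ n) (k : Fin (n + 1)) :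
    reducedRank T0 (insertLast k * σ₀) (Fin.last n) = reducedRank T0 σ₀ (σ₀.symm k) := by
  refine reducedRank_congr fun j hj => ?_
  have hj' : σ₀ j ≠ Fin.last n := fun h => by
    rw [← hσ₀, σ₀.injective.eq_iff] at h
    simp [h] at hj; omega
  simpa [hσ₀] using insertLast_lt_self_iff k hj'

end Insertion

section Counting

variable {n T0 : ℕ} {i : ℕ}

/-- Post-treatment indices other than the last one (indices are `0`-based, the pre-treatment
ones being `< T0`). -/
abbrev PrevPost (T0 n : ℕ) := {s : Fin (n + 1) // T0 ≤ (s : ℕ) ∧ (s : ℕ) + 1 < n + 1}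

/-- The indices outside `PrevPost` are the pre-treatment ones and the last one; as `σ₀` gives the
last index the top rank, they take each reduced rank `1, …, T0 + 1` exactly once. -/
theorem card_filter_not_prevPost_reducedRank_eq_one {σ₀ : Perm (Fin (n + 1))}
    (hσ₀ : σ₀ (Fin.last n) = Fin.last n) (hT0 : T0 ≤ n) (hi1 : 1 ≤ i)
    (hi2 : i ≤ T0 + 1) :
    #{s : Fin (n + 1) |
        ¬(T0 ≤ (s : ℕ) ∧ (s : ℕ) + 1 < n + 1) ∧ reducedRank T0 σ₀ s = i} = 1 := by
  set A : Finset (Fin (n + 1)) := {s | ¬(T0 ≤ (s : ℕ) ∧ (s : ℕ) + 1 < n + 1)}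
  have hcard : #A = T0 + 1 := by
    have hA : A = insert (Fin.last n) (Iio ⟨T0, by omega⟩) := by
      ext s; simp [A, Fin.lt_def, Fin.ext_iff]; omega
    rw [hA, card_insert_of_notMem (by simp [Fin.lt_def]; omega), Fin.card_Iio]
  have hrank : ∀ s ∈ A, reducedRank T0 σ₀ s = 1 + #{a ∈ A | σ₀ a < σ₀ s} := by
    intro s hs
    unfold reducedRank
    congr 2
    ext j
    simp only [A, mem_filter, mem_univ, true_and]
    refine ⟨fun h => ⟨by omega, h.2⟩, fun ⟨hj, hlt⟩ => ⟨?_, hlt⟩⟩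
    by_contra hj'
    obtain rfl : j = Fin.last n := Fin.ext (by simp; omega)
    exact (hσ₀ ▸ hlt).not_ge (Fin.le_last _)
  rw [← filter_filter]
  refine (congrArg card (filter_congr fun s hs => ?_)).trans
    (card_filter_card_filter_lt_eq_one σ₀.injective.injOn (show i - 1 < #A by omega))
  change _ ↔ #{a ∈ A | σ₀ a < σ₀ s} = i - 1
  rw [hrank s hs]
  omega

theorem card_filter_reducedRank_insertLast_mul_last {σ₀ : Perm (Fin (n + 1))}
    (hσ₀ : σ₀ (Fin.last n) = Fin.last n) (hT0 : T0 ≤ n) (hi1 : 1 ≤ i)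
    (hi2 : i ≤ T0 + 1) :
    #{k : Fin (n + 1) | reducedRank T0 (insertLast k * σ₀) (Fin.last n) = i}
      = 1 + #{s : PrevPost T0 n | reducedRank T0 σ₀ s = i} := by
  have hreindex : #{k : Fin (n + 1) | reducedRank T0 (insertLast k * σ₀) (Fin.last n) = i}
      = #{s | reducedRank T0 σ₀ s = i} := by
    simp only [reducedRank_insertLast_mul_last hσ₀ hT0, card_filter]
    exact σ₀.symm.sum_comp fun s => if reducedRank T0 σ₀ s = i then 1 else 0
  have hsplit := card_filter_add_card_filter_not (s := {s | reducedRank T0 σ₀ s = i})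
    (fun s : Fin (n + 1) => T0 ≤ (s : ℕ) ∧ (s : ℕ) + 1 < n + 1)
  simp only [filter_filter, and_comm (a := reducedRank T0 σ₀ _ = i)] at hsplit
  rw [hreindex, ← hsplit, card_filter_not_prevPost_reducedRank_eq_one hσ₀ hT0 hi1 hi2,
    add_comm, ← card_filter_subtype]

theorem mul_card_reducedRank_last_eq (hT0 : T0 ≤ n) (hi1 : 1 ≤ i) (hi2 : i ≤ T0 + 1)
    (b : PrevPost T0 n → ℕ) :
    (n + 1) * #{σ : Perm (Fin (n + 1)) |
        (∀ s : PrevPost T0 n, reducedRank T0 σ s = b s) ∧ reducedRank T0 σ (Fin.last n) = i}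
      = (1 + #{s | b s = i}) *
        #{σ : Perm (Fin (n + 1)) | ∀ s : PrevPost T0 n, reducedRank T0 σ s = b s} := by
  set Q : Perm (Fin (n + 1)) → Prop := fun σ => ∀ s : PrevPost T0 n, reducedRank T0 σ s = b s
  have hQ (σ₀ : LastStabilizer n) (k : Fin (n + 1)) :
      Q (insertLast k * σ₀.1) ↔ Q σ₀.1 := by
    refine forall_congr' fun s => ?_
    rw [reducedRank_insertLast_mul_of_ne_last σ₀.2 hT0 k (Fin.ne_of_val_ne (by simp; omega))]
  have hcard_last (σ₀ : LastStabilizer n) :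
      #{k : Fin (n + 1) | Q (insertLast k * σ₀.1) ∧
          reducedRank T0 ⇑(insertLast k * σ₀.1) (Fin.last n) = i}
        = if Q σ₀.1 then 1 + #{s | b s = i} else 0 := by
    by_cases hq : Q σ₀.1
    · simp only [hQ, hq, true_and, if_true]
      rw [card_filter_reducedRank_insertLast_mul_last σ₀.2 hT0 hi1 hi2]
      congr 2
      exact filter_congr fun s _ => by rw [hq s]
    · simp [hQ, hq]
  have hcard (σ₀ : LastStabilizer n) :
      #{k : Fin (n + 1) | Q (insertLast k * σ₀.1)} = if Q σ₀.1 then n + 1 else 0 := by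
    by_cases hq : Q σ₀.1 <;> simp [hQ, hq]
  rw [card_filter_perm_eq_sum, card_filter_perm_eq_sum Q,
    sum_congr rfl fun σ₀ _ => hcard_last σ₀, sum_congr rfl fun σ₀ _ => hcard σ₀,
    sum_ite, sum_ite]
  simp only [Finset.sum_const, smul_eq_mul]
  ring

end Counting

section OrderPattern

variable {m : ℕ}

def orderPatternSet (σ : Perm (Fin m)) : Set (Fin m → ℝ) :=
  {x | ∀ j j', x j < x j' ↔ σ j < σ j'}

theorem measurableSet_orderPatternSet (σ : Perm (Fin m)) : MeasurableSet (orderPatternSet σ) :=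
  measurableSet_setOfPred.2 <| Measurable.forall fun j => Measurable.forall fun j' =>
    (measurableSet_setOfPred.1
      (measurableSet_lt (measurable_pi_apply j) (measurable_pi_apply j'))).iff measurable_const

theorem comp_symm_mem_orderPatternSet_one_iff {x : Fin m → ℝ} {σ : Perm (Fin m)} :
    x ∘ σ.symm ∈ orderPatternSet 1 ↔ x ∈ orderPatternSet σ :=
  ⟨fun h j j' => by simpa using h (σ j) (σ j'),
    fun h a b => by simpa using h (σ.symm a) (σ.symm b)⟩

theorem eq_of_mem_orderPatternSet {x : Fin m → ℝ} {σ τ : Perm (Fin m)}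
    (hσ : x ∈ orderPatternSet σ) (hτ : x ∈ orderPatternSet τ) : σ = τ := by
  have : Monotone ⇑(τ * σ⁻¹) := StrictMono.monotone fun a b hab =>
    (hτ _ _).1 ((hσ _ _).2 (by simpa using hab))
  rw [Perm.monotone_iff, mul_inv_eq_one] at this
  exact this.symm

theorem exists_mem_orderPatternSet {x : Fin m → ℝ} (hx : Injective x) :
    ∃ σ, x ∈ orderPatternSet σ := by
  have hmono : StrictMono (x ∘ Tuple.sort x) :=
    (Tuple.monotone_sort x).strictMono_of_injective (hx.comp (Tuple.sort x).injective)
  refine ⟨(Tuple.sort x)⁻¹, fun j j' => ?_⟩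
  simpa [Perm.inv_def] using
    hmono.lt_iff_lt (a := (Tuple.sort x).symm j) (b := (Tuple.sort x).symm j')

theorem measurable_reducedRank_apply {Ω : Type*} {mΩ : MeasurableSpace Ω}
    {Y : Fin m → Ω → ℝ} (hY : ∀ j, Measurable (Y j)) (T0 : ℕ) (s : Fin m) :
    Measurable fun ω => reducedRank T0 (fun j => Y j ω) s :=
  (measurable_reducedRank T0 s).comp (measurable_pi_lambda _ hY)

theorem reducedRank_eq_of_mem_orderPatternSet {T0 : ℕ} {x : Fin m → ℝ} {σ : Perm (Fin m)}
    (hx : x ∈ orderPatternSet σ) (s : Fin m) : reducedRank T0 x s = reducedRank T0 σ s :=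
  reducedRank_congr fun j _ => hx j s

variable {Ω : Type*} {mΩ : MeasurableSpace Ω} {P : Measure Ω} {Y : Fin m → Ω → ℝ}

theorem measure_preimage_orderPatternSet_eq (hY : ∀ j, Measurable (Y j))
    (hexch : Exchangeable P Y)
    (σ : Perm (Fin m)) :
    P ((fun ω j => Y j ω) ⁻¹' orderPatternSet σ)
      = P ((fun ω j => Y j ω) ⁻¹' orderPatternSet 1) := by
  rw [← hexch.measure_comp_perm_preimage hY σ.symm (measurableSet_orderPatternSet 1)]
  congr 1
  ext ω
  exact comp_symm_mem_orderPatternSet_one_iff.symm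

theorem measure_eq_card_mul_of_orderPattern (hY : ∀ j, Measurable (Y j))
    (hexch : Exchangeable P Y)
    (hinj : ∀ᵐ ω ∂P, Injective fun j => Y j ω) {D : Set Ω} (hD : MeasurableSet D)
    (S : Finset (Perm (Fin m)))
    (hDS : ∀ σ ω, (fun j => Y j ω) ∈ orderPatternSet σ → (ω ∈ D ↔ σ ∈ S)) :
    P D = #S * P ((fun ω j => Y j ω) ⁻¹' orderPatternSet 1) := by
  set E : Perm (Fin m) → Set Ω := fun σ => (fun ω j => Y j ω) ⁻¹' orderPatternSet σ
  have hcover : P (⋃ σ, E σ)ᶜ = 0 := by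
    refine measure_mono_null ?_ (ae_iff.1 hinj)
    intro ω hω hinjω
    obtain ⟨σ, hσ⟩ := exists_mem_orderPatternSet hinjω
    exact hω (Set.mem_iUnion.2 ⟨σ, hσ⟩)
  have hdisj : Pairwise (Disjoint on fun σ => D ∩ E σ) := fun σ τ hne =>
    Set.disjoint_left.2 fun ω hσ hτ => hne (eq_of_mem_orderPatternSet hσ.2 hτ.2)
  have hterm (σ : Perm (Fin m)) : P (D ∩ E σ) = if σ ∈ S then P (E 1) else 0 := by
    split_ifs with hσ
    · rw [Set.inter_eq_right.2 (show E σ ⊆ D from fun ω hω => (hDS σ ω hω).2 hσ)]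
      exact measure_preimage_orderPatternSet_eq hY hexch σ
    · exact measure_mono_null (fun ω h => (hσ ((hDS σ ω h.2).1 h.1)).elim) measure_empty
  rw [← measure_inter_conull hcover, Set.inter_iUnion, measure_iUnion hdisj
    fun σ => hD.inter ((measurableSet_orderPatternSet σ).preimage (measurable_pi_lambda _ hY)),
    tsum_fintype, sum_congr rfl fun σ _ => hterm σ, sum_ite_mem, univ_inter, sum_const,
    nsmul_eq_mul]

end OrderPattern

theorem mul_measureReal_reducedRank_last_eq {Ω : Type*} {mΩ : MeasurableSpace Ω} {P : Measure Ω}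
    [IsFiniteMeasure P] {n T0 i : ℕ} {Y : Fin (n + 1) → Ω → ℝ}
    (hY : ∀ j, Measurable (Y j)) (hexch : Exchangeable P Y)
    (hinj : ∀ᵐ ω ∂P, Injective fun j => Y j ω) (hT0 : T0 ≤ n)
    (hi1 : 1 ≤ i) (hi2 : i ≤ T0 + 1) (b : PrevPost T0 n → ℕ) :
    (n + 1) * P.real ({ω | ∀ s : PrevPost T0 n, reducedRank T0 (fun j => Y j ω) s = b s} ∩
        {ω | reducedRank T0 (fun j => Y j ω) (Fin.last n) = i})
      = (1 + #{s | b s = i}) *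
        P.real {ω | ∀ s : PrevPost T0 n, reducedRank T0 (fun j => Y j ω) s = b s} := by
  set F := {ω | ∀ s : PrevPost T0 n, reducedRank T0 (fun j => Y j ω) s = b s}
  have hF : MeasurableSet F := measurableSet_setOfPred.2 <| Measurable.forall fun s =>
    measurableSet_setOfPred.1 (measurable_reducedRank_apply hY T0 s (measurableSet_singleton _))
  have hD : MeasurableSet (F ∩ {ω | reducedRank T0 (fun j => Y j ω) (Fin.last n) = i}) :=
    hF.inter (measurable_reducedRank_apply hY T0 _ (measurableSet_singleton i))
  rw [measureReal_def, measureReal_def,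
    measure_eq_card_mul_of_orderPattern hY hexch hinj hD
      {σ | (∀ s : PrevPost T0 n, reducedRank T0 σ s = b s) ∧
        reducedRank T0 σ (Fin.last n) = i}
      fun σ ω hω => by simp [F, reducedRank_eq_of_mem_orderPatternSet hω],
    measure_eq_card_mul_of_orderPattern hY hexch hinj hF
      {σ | ∀ s : PrevPost T0 n, reducedRank T0 σ s = b s}
      fun σ ω hω => by simp [F, reducedRank_eq_of_mem_orderPatternSet hω]]
  simp only [ENNReal.toReal_mul, ENNReal.toReal_natCast, ← mul_assoc]
  congr 1
  exact_mod_cast mul_card_reducedRank_last_eq hT0 hi1 hi2 b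

theorem condExp_indicator_reducedRank_last_ae_eq {Ω : Type*} {mΩ : MeasurableSpace Ω}
    {P : Measure Ω} [IsFiniteMeasure P] {n T0 i : ℕ} {Y : Fin (n + 1) → Ω → ℝ}
    (hY : ∀ j, Measurable (Y j)) (hexch : Exchangeable P Y)
    (hinj : ∀ᵐ ω ∂P, Injective fun j => Y j ω) (hT0 : T0 ≤ n) (hi1 : 1 ≤ i)
    (hi2 : i ≤ T0 + 1) :
    P[{ω | reducedRank T0 (fun j => Y j ω) (Fin.last n) = i}.indicator fun _ => (1 : ℝ) |
        MeasurableSpace.comap (fun ω (s : PrevPost T0 n) => reducedRank T0 (fun j => Y j ω) s)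
          inferInstance]
      =ᵐ[P] fun ω =>
        (1 + (#{s : PrevPost T0 n | reducedRank T0 (fun j => Y j ω) s = i} : ℝ)) /
          ((n + 1 : ℕ) : ℝ) := by
  have hlast : MeasurableSet {ω | reducedRank T0 (fun j => Y j ω) (Fin.last n) = i} :=
    measurable_reducedRank_apply hY T0 _ (measurableSet_singleton i)
  have hbound (b : PrevPost T0 n → ℕ) :
      ‖(1 + (#{s | b s = i} : ℝ)) / ((n + 1 : ℕ) : ℝ)‖
        ≤ 1 + Fintype.card (PrevPost T0 n) := by
    rw [Real.norm_of_nonneg (by positivity)]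
    exact (div_le_self (by positivity) (by simp)).trans (by gcongr; exact card_le_univ _)
  have hG : Measurable fun ω (s : PrevPost T0 n) => reducedRank T0 (fun j => Y j ω) s :=
    measurable_pi_lambda _ fun s => measurable_reducedRank_apply hY T0 s
  refine condExp_comap_ae_eq_comp hG ((integrable_const (1 : ℝ)).indicator hlast) hbound
    fun b => ?_
  have hfiber : (fun ω (s : PrevPost T0 n) => reducedRank T0 (fun j => Y j ω) s) ⁻¹' {b}
      = {ω | ∀ s : PrevPost T0 n, reducedRank T0 (fun j => Y j ω) s = b s} :=
    Set.ext fun ω => funext_iff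
  have hprob := mul_measureReal_reducedRank_last_eq hY hexch hinj hT0 hi1 hi2 b
  rw [setIntegral_indicator hlast, setIntegral_const, smul_eq_mul, smul_eq_mul, mul_one, hfiber,
    mul_div_assoc', div_eq_iff (by positivity)]
  push_cast
  linear_combination -hprob

end SequentialRank

open SequentialRank in
theorem stmt_6_general
    {Ω : Type*} [mΩ : MeasurableSpace Ω] (P : Measure Ω) [IsProbabilityMeasure P]
    (t T0 : ℕ) (hT0t : T0 < t)
    (Y : Fin t → Ω → ℝ) (hY : ∀ s, Measurable (Y s))
    (hexch : Exchangeable P Y)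
    (hdist : ∀ᵐ ω ∂P, ∀ s s' : Fin t, s ≠ s' → Y s ω ≠ Y s' ω)
    (Rred : Fin t → Ω → ℕ)
    (hRred : ∀ s ω, Rred s ω
      = 1 + (Finset.univ.filter (fun j : Fin t => (j : ℕ) < T0 ∧ Y j ω < Y s ω)).card)
    (𝒢 : MeasurableSpace Ω)
    (h𝒢 : 𝒢 = MeasurableSpace.comap
      (fun ω => fun s : {s : Fin t // T0 ≤ (s : ℕ) ∧ (s : ℕ) + 1 < t} => Rred s.1 ω)
      inferInstance)
    (tlast : Fin t) (htlast : (tlast : ℕ) = t - 1) :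
    ∀ i : ℕ, 1 ≤ i → i ≤ T0 + 1 →
      P[Set.indicator {ω | Rred tlast ω = i} (fun _ => (1 : ℝ))|𝒢]
        =ᵐ[P] fun ω =>
          (1 + ((Finset.univ.filter
            (fun s : Fin t => T0 ≤ (s : ℕ) ∧ (s : ℕ) + 1 < t ∧ Rred s ω = i)).card : ℝ))
          / (t : ℝ) := by
  intro i hi1 hi2
  obtain ⟨n, rfl⟩ : ∃ n, t = n + 1 := ⟨t - 1, by omega⟩
  obtain rfl : tlast = Fin.last n := Fin.ext (by simpa using htlast)
  obtain rfl : Rred = fun s ω => reducedRank T0 (fun j => Y j ω) s := funext₂ hRred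
  subst h𝒢
  have hinj : ∀ᵐ ω ∂P, Injective fun j => Y j ω :=
    hdist.mono fun ω h a b hab => by_contra fun hne => h a b hne hab
  refine (condExp_indicator_reducedRank_last_ae_eq hY hexch hinj (by omega) hi1 hi2).trans
    (.of_eq (funext fun ω => ?_))
  congr 3
  exact (card_filter_subtype (fun s : Fin (n + 1) => T0 ≤ (s : ℕ) ∧ (s : ℕ) + 1 < n + 1)
    (fun s => reducedRank T0 (fun j => Y j ω) s = i)).trans (by simp only [and_assoc])

/-- Let `Y_1,…,Y_t` (here indexed 0-based by `Fin t`, pre-treatment indices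
being those `< T0`, post-treatment those `≥ T0`, the current one being `t-1`) be
exchangeable and a.s. pairwise distinct. With `R̃_s := 1 + #{j < T0 : Y_j < Y_s}` the
reduced sequential ranks, a.s. for every `i ∈ {1,…,T0+1}`, the conditional probability
that `R̃_{t} = i` given the previous reduced ranks `R̃_{T0+1},…,R̃_{t−1}` equals
`(1 + #{previous post-treatment s with R̃_s = i}) / t`. -/
theorem stmt_6
    {Ω : Type*} [mΩ : MeasurableSpace Ω] (P : Measure Ω) [IsProbabilityMeasure P]
    (t T0 : ℕ) (hT0 : 1 ≤ T0) (hT0t : T0 < t)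
    (Y : Fin t → Ω → ℝ) (hY : ∀ s, Measurable (Y s))
    (hexch : Exchangeable P Y)
    (hdist : ∀ᵐ ω ∂P, ∀ s s' : Fin t, s ≠ s' → Y s ω ≠ Y s' ω)
    (Rred : Fin t → Ω → ℕ)
    (hRred : ∀ s ω, Rred s ω
      = 1 + (Finset.univ.filter (fun j : Fin t => (j : ℕ) < T0 ∧ Y j ω < Y s ω)).card)
    (𝒢 : MeasurableSpace Ω)
    (h𝒢 : 𝒢 = MeasurableSpace.comap
      (fun ω => fun s : {s : Fin t // T0 ≤ (s : ℕ) ∧ (s : ℕ) + 1 < t} => Rred s.1 ω)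
      inferInstance)
    (tlast : Fin t) (htlast : (tlast : ℕ) = t - 1) :
    ∀ i : ℕ, 1 ≤ i → i ≤ T0 + 1 →
      P[Set.indicator {ω | Rred tlast ω = i} (fun _ => (1 : ℝ))|𝒢]
        =ᵐ[P] fun ω =>
          (1 + ((Finset.univ.filter
            (fun s : Fin t => T0 ≤ (s : ℕ) ∧ (s : ℕ) + 1 < t ∧ Rred s ω = i)).card : ℝ))
          / (t : ℝ) :=
  stmt_6_general (mΩ := mΩ) P t T0 hT0t Y hY hexch hdist Rred hRred 𝒢 h𝒢 tlast htlast
end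

section
/- Let Y_1,…,Y_T be exchangeable real-valued random variables that are almost surely pairwise distinct. For t = 1,…,T define the sequential rank R_t := #{s ≤ t : Y_s ≤ Y_t}. Then R_1,…,R_T are mutually independent and, for each t, R_t is uniformly distributed on {1,…,t}. -/
/-!
Almost surely the values `Y₁, …, Y_T` are distinct, so up to a null set the sample space splits
into the `T!` events on which `(Y_t)` is ordered like a given permutation `σ`; exchangeability
makes these events equally likely. On the event for `σ` the vector of sequential ranks is the
rank vector of `σ`, and `σ ↦ seqRank σ` is a bijection from permutations onto the box
`∏ t, {1, …, t + 1}`: it is injective because the sequential ranks reconstruct the relative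
order step by step, and both sides have `T!` elements. So the rank vector is uniform on a product
box, i.e. its law is the product of the uniform laws of its coordinates.
-/
open MeasureTheory ProbabilityTheory
open scoped ENNReal NNReal

open Finset Function

section SeqRank

variable {α : Type*} [LinearOrder α] {T : ℕ}

def seqRank (f : Fin T → α) (t : Fin T) : ℕ := #{s | s ≤ t ∧ f s ≤ f t}

def rankBox (T : ℕ) : Finset (Fin T → ℕ) := Fintype.piFinset fun t => Icc 1 ((t : ℕ) + 1)

lemma seqRank_mem_rankBox (f : Fin T → α) : seqRank f ∈ rankBox T := by
  refine Fintype.mem_piFinset.2 fun t => mem_Icc.2 ⟨card_pos.2 ⟨t, by simp⟩, ?_⟩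
  calc seqRank f t ≤ #(Iic t) := card_le_card fun s hs => by simpa using (mem_filter.1 hs).2.1
    _ = t + 1 := Fin.card_Iic t

lemma rankBox_nonempty : (rankBox T).Nonempty :=
  ⟨_, seqRank_mem_rankBox (Equiv.refl (Fin T))⟩

lemma card_rankBox : #(rankBox T) = T.factorial := by
  simp [rankBox, Fintype.card_piFinset, Fin.prod_univ_eq_prod_range (· + 1),
    prod_range_add_one_eq_factorial]

lemma seqRank_comp_of_strictMono {β : Type*} [LinearOrder β] {g : α → β} (hg : StrictMono g)
    (f : Fin T → α) : seqRank (g ∘ f) = seqRank f := by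
  ext t
  simp [seqRank, hg.le_iff_le]

lemma seqRank_eq_card_add_one (f : Fin T → α) (b : Fin T) :
    seqRank f b = #{v | v < b ∧ f v ≤ f b} + 1 := by
  rw [seqRank, ← card_insert_of_notMem (s := filter _ _) (a := b) (by simp)]
  congr 1
  ext v
  simp only [mem_filter, mem_univ, true_and, mem_insert, le_iff_lt_or_eq]
  constructor
  · rintro ⟨hv | rfl, h⟩ <;> simp_all
  · rintro (rfl | ⟨hv, h⟩) <;> simp_all

lemma lt_iff_card_lt_seqRank {f : Fin T → α} (hf : Injective f) {a b : Fin T}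
    (hab : a < b) : f a < f b ↔ #{v | v < b ∧ f v ≤ f a} < seqRank f b := by
  rw [seqRank_eq_card_add_one, Nat.lt_succ_iff]
  constructor
  · intro h
    refine card_le_card fun v hv => ?_
    simp only [mem_filter, mem_univ, true_and] at hv ⊢
    exact ⟨hv.1, hv.2.trans h.le⟩
  · intro h
    by_contra! hba
    replace hba := lt_of_le_of_ne hba (hf.ne hab.ne')
    have hsub : insert a ({v | v < b ∧ f v ≤ f b} : Finset _)
        ⊆ ({v | v < b ∧ f v ≤ f a} : Finset _) := by
      intro v hv
      simp only [mem_insert, mem_filter, mem_univ, true_and] at hv ⊢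
      rcases hv with rfl | ⟨hv, hvb⟩
      exacts [⟨hab, le_rfl⟩, ⟨hv, hvb.trans hba.le⟩]
    have := card_le_card hsub
    rw [card_insert_of_notMem (by simp [hba])] at this
    omega

/-- The sequential ranks of an injective sequence determine its relative order: the rank of `b`
locates `f b` among the earlier values, whose relative order is known by induction. -/
lemma le_iff_le_of_seqRank_eq {f g : Fin T → α} (hf : Injective f)
    (hg : Injective g) (h : seqRank f = seqRank g) (a b : Fin T) :
    f a ≤ f b ↔ g a ≤ g b := by
  suffices H : ∀ c : ℕ, ∀ a b : Fin T, (a : ℕ) < c → (b : ℕ) < c → (f a ≤ f b ↔ g a ≤ g b) from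
    H (a + b + 1) a b (by omega) (by omega)
  intro c
  induction c with
  | zero => intro a b ha; omega
  | succ c ih =>
    have hlt : ∀ a b : Fin T, a < b → (b : ℕ) < c + 1 → (f a < f b ↔ g a < g b) := by
      intro a b hab hb
      rw [lt_iff_card_lt_seqRank hf hab, lt_iff_card_lt_seqRank hg hab, h]
      rw [Fin.lt_def] at hab
      congr! 2
      refine filter_congr fun v _ => and_congr_right fun hv => ih v a ?_ ?_
      all_goals rw [Fin.lt_def] at hv; omega
    intro a b ha hb
    rcases lt_trichotomy a b with hab | rfl | hab
    · rw [(hf.ne hab.ne).le_iff_lt, (hg.ne hab.ne).le_iff_lt]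
      exact hlt a b hab hb
    · simp
    · rw [← not_lt, ← not_lt, hlt b a hab ha]

lemma seqRank_perm_injective : Injective fun σ : Equiv.Perm (Fin T) => seqRank σ := by
  intro σ τ h
  have hle := le_iff_le_of_seqRank_eq σ.injective τ.injective h
  have hmono : StrictMono (τ ∘ σ.symm) := fun x y hxy =>
    not_le.1 fun hyx => hxy.not_ge (by simpa using (hle _ _).2 hyx)
  ext x
  simpa using congrArg Fin.val (le_antisymm hmono.le_apply (hmono.apply_le (x := σ x)))

lemma image_seqRank_perm : univ.image (fun σ : Equiv.Perm (Fin T) => seqRank σ) = rankBox T := by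
  refine eq_of_subset_of_card_le (fun r hr => ?_) ?_
  · obtain ⟨σ, -, rfl⟩ := mem_image.1 hr
    exact seqRank_mem_rankBox σ
  · rw [card_rankBox, card_image_of_injective _ seqRank_perm_injective, card_univ,
      Fintype.card_perm, Fintype.card_fin]

lemma sum_seqRank_perm {M : Type*} [AddCommMonoid M] (φ : (Fin T → ℕ) → M) :
    ∑ σ : Equiv.Perm (Fin T), φ (seqRank σ) = ∑ r ∈ rankBox T, φ r := by
  rw [← image_seqRank_perm, sum_image fun σ _ τ _ h => seqRank_perm_injective h]

end SeqRank

lemma PMF.toMeasure_uniformOfFinset_piFinset {ι : Type*} [Fintype ι] [DecidableEq ι]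
    {β : ι → Type*} [∀ i, DecidableEq (β i)] [∀ i, Countable (β i)]
    [∀ i, MeasurableSpace (β i)] [∀ i, MeasurableSingletonClass (β i)]
    (s : ∀ i, Finset (β i)) (hs : ∀ i, (s i).Nonempty) :
    (uniformOfFinset (Fintype.piFinset s) (Fintype.piFinset_nonempty.2 hs)).toMeasure
      = Measure.pi fun i => (uniformOfFinset (s i) (hs i)).toMeasure := by
  refine Measure.ext_of_singleton fun r => ?_
  simp only [toMeasure_apply_singleton _ _ (measurableSet_singleton _), Measure.pi_singleton,
    uniformOfFinset_apply, Fintype.mem_piFinset, Fintype.card_piFinset]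
  by_cases hr : ∀ i, r i ∈ s i
  · simp only [hr, if_true, implies_true, Nat.cast_prod]
    exact ENNReal.prod_inv_distrib fun _ _ _ _ _ => .inr (ENNReal.natCast_ne_top _)
  · obtain ⟨i, hi⟩ := not_forall.1 hr
    rw [if_neg hr, prod_eq_zero (mem_univ i) (if_neg hi)]

section AEPartition

variable {Ω ι : Type*} [MeasurableSpace Ω] {P : Measure Ω} [Fintype ι] {E : ι → Set Ω}

lemma measure_eq_sum_inter_of_ae_partition (hE : ∀ i, MeasurableSet (E i))
    (hdisj : Pairwise (Disjoint on E)) (hcov : ∀ᵐ ω ∂P, ∃ i, ω ∈ E i) {D : Set Ω}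
    (hD : MeasurableSet D) : P D = ∑ i, P (D ∩ E i) := by
  have hconull : P (⋃ i, E i)ᶜ = 0 := by
    rw [← ae_iff.1 hcov]; congr 1; ext; simp
  rw [← measure_inter_conull hconull, Set.inter_iUnion, measure_iUnion
    (fun i j hij => (hdisj hij).mono Set.inter_subset_right Set.inter_subset_right)
    fun i => hD.inter (hE i), tsum_fintype]

lemma measure_eq_inv_card_of_ae_partition [IsProbabilityMeasure P]
    (hE : ∀ i, MeasurableSet (E i)) (hdisj : Pairwise (Disjoint on E))
    (hcov : ∀ᵐ ω ∂P, ∃ i, ω ∈ E i) (heq : ∀ i j, P (E i) = P (E j)) (i : ι) :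
    P (E i) = (Fintype.card ι : ℝ≥0∞)⁻¹ := by
  have h := measure_eq_sum_inter_of_ae_partition hE hdisj hcov MeasurableSet.univ
  simp only [Set.univ_inter, measure_univ, fun j => heq j i, sum_const, card_univ,
    nsmul_eq_mul] at h
  exact ENNReal.eq_inv_of_mul_eq_one_left (by rw [mul_comm, h])

end AEPartition

section OrderEvents

variable {Ω α : Type*} [LinearOrder α] {T : ℕ}

-- `ω ∈ orderedLike Y σ` means `Y a ω < Y b ω ↔ σ a < σ b` for all `a b`.
def orderedLike (Y : Fin T → Ω → α) (σ : Equiv.Perm (Fin T)) : Set Ω :=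
  {ω | StrictMono fun i => Y (σ.symm i) ω}

lemma seqRank_eq_of_mem_orderedLike {Y : Fin T → Ω → α} {σ : Equiv.Perm (Fin T)} {ω : Ω}
    (hω : ω ∈ orderedLike Y σ) : seqRank (Y · ω) = seqRank σ := by
  have : (Y · ω) = (fun i => Y (σ.symm i) ω) ∘ σ := by ext; simp
  rw [this, seqRank_comp_of_strictMono hω]

lemma pairwise_disjoint_orderedLike (Y : Fin T → Ω → α) : Pairwise (Disjoint on orderedLike Y) :=
  fun _ _ hστ => Set.disjoint_left.2 fun _ hσ hτ => hστ <| seqRank_perm_injective <|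
    (seqRank_eq_of_mem_orderedLike hσ).symm.trans (seqRank_eq_of_mem_orderedLike hτ)

lemma exists_mem_orderedLike {Y : Fin T → Ω → α} {ω : Ω} (hω : Injective (Y · ω)) :
    ∃ σ, ω ∈ orderedLike Y σ :=
  ⟨(Tuple.sort (Y · ω)).symm, (Tuple.monotone_sort (Y · ω)).strictMono_of_injective
    (hω.comp (Tuple.sort _).injective)⟩

variable [MeasurableSpace Ω] {P : Measure Ω} [TopologicalSpace α] [OrderClosedTopology α]
  [SecondCountableTopology α] [MeasurableSpace α] [OpensMeasurableSpace α]
  {Y : Fin T → Ω → α}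

lemma measurableSet_orderedLike (hY : ∀ s, Measurable (Y s)) (σ : Equiv.Perm (Fin T)) :
    MeasurableSet (orderedLike Y σ) := by
  have : orderedLike Y σ = ⋂ (i) (j) (_ : i < j), {ω | Y (σ.symm i) ω < Y (σ.symm j) ω} := by
    ext; simp [orderedLike, StrictMono]
  rw [this]
  exact .iInter fun i => .iInter fun j => .iInter fun _ => measurableSet_lt (hY _) (hY _)

lemma measurable_seqRank (hY : ∀ s, Measurable (Y s)) :
    Measurable fun ω => seqRank (Y · ω) := by
  refine measurable_pi_lambda _ fun t => ?_
  simp only [seqRank, card_filter]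
  exact Finset.measurable_sum _ fun s _ =>
    Measurable.ite ((MeasurableSet.const _).inter (measurableSet_le (hY s) (hY t)))
      measurable_const measurable_const

lemma Exchangeable.measure_orderedLike [IsProbabilityMeasure P] (hY : ∀ s, Measurable (Y s))
    (hexch : Exchangeable P Y) (hdist : ∀ᵐ ω ∂P, Injective (Y · ω)) (σ : Equiv.Perm (Fin T)) :
    P (orderedLike Y σ) = (T.factorial : ℝ≥0∞)⁻¹ := by
  have hmeas : MeasurableSet {y : Fin T → α | StrictMono y} :=
    measurableSet_orderedLike (Y := fun i (y : Fin T → α) => y i) measurable_pi_apply 1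
  have heq : ∀ σ, P (orderedLike Y σ) = P (orderedLike Y 1) := fun σ => by
    have hmap := congrArg (· {y | StrictMono y}) (hexch σ.symm)
    simp only [Measure.map_apply (measurable_pi_lambda _ fun i => hY _) hmeas] at hmap
    exact hmap
  rw [measure_eq_inv_card_of_ae_partition (measurableSet_orderedLike hY)
    (pairwise_disjoint_orderedLike Y) (hdist.mono fun ω => exists_mem_orderedLike)
    (fun σ τ => (heq σ).trans (heq τ).symm), Fintype.card_perm, Fintype.card_fin]

lemma Exchangeable.map_seqRank [IsProbabilityMeasure P] (hY : ∀ s, Measurable (Y s))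
    (hexch : Exchangeable P Y) (hdist : ∀ᵐ ω ∂P, Injective (Y · ω)) :
    P.map (fun ω => seqRank (Y · ω)) = (PMF.uniformOfFinset _ rankBox_nonempty).toMeasure := by
  refine Measure.ext_of_singleton fun r => ?_
  have hpiece : ∀ σ, (fun ω => seqRank (Y · ω)) ⁻¹' {r} ∩ orderedLike Y σ
      = if seqRank σ = r then orderedLike Y σ else ∅ := fun σ => by
    ext ω
    split_ifs with hσ
    · exact ⟨And.right, fun hω => ⟨(seqRank_eq_of_mem_orderedLike hω).trans hσ, hω⟩⟩
    · exact ⟨fun ⟨hr, hω⟩ => hσ ((seqRank_eq_of_mem_orderedLike hω).symm.trans hr), False.elim⟩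
  rw [Measure.map_apply (measurable_seqRank hY) (measurableSet_singleton r),
    PMF.toMeasure_apply_singleton _ _ (measurableSet_singleton r), PMF.uniformOfFinset_apply,
    card_rankBox, measure_eq_sum_inter_of_ae_partition (measurableSet_orderedLike hY)
      (pairwise_disjoint_orderedLike Y) (hdist.mono fun ω => exists_mem_orderedLike)
      (measurable_seqRank hY (measurableSet_singleton r))]
  simp only [hpiece, apply_ite P, measure_empty, hexch.measure_orderedLike hY hdist]
  rw [sum_seqRank_perm (fun r' => if r' = r then _ else 0), sum_ite_eq']
  congr

end OrderEvents

-- `Fin T` is 0-based, so the rank of the observation with index `t` ranges over `{1, …, t + 1}`.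
theorem stmt_7_general
    {Ω : Type*} [mΩ : MeasurableSpace Ω] (P : Measure Ω) [IsProbabilityMeasure P]
    (T : ℕ)
    (Y : Fin T → Ω → ℝ) (hY : ∀ s, Measurable (Y s))
    (hexch : Exchangeable P Y)
    (hdist : ∀ᵐ ω ∂P, ∀ s s' : Fin T, s ≠ s' → Y s ω ≠ Y s' ω)
    (R : Fin T → Ω → ℕ)
    (hR : ∀ t ω, R t ω
      = (Finset.univ.filter (fun s : Fin T => s ≤ t ∧ Y s ω ≤ Y t ω)).card) :
    iIndepFun R P ∧
      ∀ t : Fin T, ∀ r : ℕ, 1 ≤ r → r ≤ (t : ℕ) + 1 →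
        P {ω | R t ω = r} = (((t : ℕ) : ℝ≥0∞) + 1)⁻¹ := by
  let ν (t : Fin T) :=
    (PMF.uniformOfFinset (Icc 1 ((t : ℕ) + 1)) (nonempty_Icc.2 (by omega))).toMeasure
  have hRY : (fun ω t => R t ω) = fun ω => seqRank (Y · ω) := funext₂ fun ω t => hR t ω
  have hRm : Measurable fun ω t => R t ω := hRY ▸ measurable_seqRank hY
  have hRtm : ∀ t, Measurable (R t) := fun t => (measurable_pi_apply t).comp hRm
  have hinj : ∀ᵐ ω ∂P, Injective (Y · ω) :=
    hdist.mono fun ω h a b hab => by_contra fun hne => h a b hne hab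
  have hlaw : P.map (fun ω t => R t ω) = Measure.pi ν := by
    rw [hRY, hexch.map_seqRank hY hinj]
    exact PMF.toMeasure_uniformOfFinset_piFinset _ _
  have hmarg : ∀ t, P.map (R t) = ν t := fun t => by
    rw [← (measurePreserving_eval ν t).map_eq, ← hlaw,
      Measure.map_map (measurable_pi_apply t) hRm]
    rfl
  refine ⟨(iIndepFun_iff_map_fun_eq_pi_map fun t => (hRtm t).aemeasurable).2 ?_,
    fun t r hr1 hr2 => ?_⟩
  · rw [hlaw]
    exact congrArg Measure.pi (funext hmarg).symm
  · rw [show {ω | R t ω = r} = R t ⁻¹' {r} from rfl,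
      ← Measure.map_apply (hRtm t) (measurableSet_singleton r), hmarg t,
      PMF.toMeasure_apply_singleton _ _ (measurableSet_singleton r), PMF.uniformOfFinset_apply,
      if_pos (mem_Icc.2 ⟨hr1, hr2⟩), Nat.card_Icc]
    simp

/-- If `Y_1,…,Y_T` (here 0-based, indexed by `Fin T`) are exchangeable and
a.s. pairwise distinct, then the sequential ranks `R_t := #{s ≤ t : Y_s ≤ Y_t}` are
mutually independent and each `R_t` is uniform on `{1,…,t}` (here `{1,…,(t:ℕ)+1}`
for the 0-based index `t`). -/
theorem stmt_7
    {Ω : Type*} [mΩ : MeasurableSpace Ω] (P : Measure Ω) [IsProbabilityMeasure P]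
    (T : ℕ) (hT : 1 ≤ T)
    (Y : Fin T → Ω → ℝ) (hY : ∀ s, Measurable (Y s))
    (hexch : Exchangeable P Y)
    (hdist : ∀ᵐ ω ∂P, ∀ s s' : Fin T, s ≠ s' → Y s ω ≠ Y s' ω)
    (R : Fin T → Ω → ℕ)
    (hR : ∀ t ω, R t ω
      = (Finset.univ.filter (fun s : Fin T => s ≤ t ∧ Y s ω ≤ Y t ω)).card) :
    iIndepFun R P ∧
      ∀ t : Fin T, ∀ r : ℕ, 1 ≤ r → r ≤ (t : ℕ) + 1 →
        P {ω | R t ω = r} = (((t : ℕ) : ℝ≥0∞) + 1)⁻¹ :=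
  stmt_7_general (mΩ := mΩ) P T Y hY hexch hdist R hR
end

section
/- Consider units i = 1,…,N+1 and time periods t = 1,…,T with 1 ≤ T_0 < T, a set of blank periods 𝓑 ⊆ {1,…,T_0} and nonempty training periods 𝓔 := {1,…,T_0} \ 𝓑. Suppose the outcomes satisfy the interactive fixed effects model with parallel trends: Y_{it} = μ_{1i} + Σ_{k=2}^r μ_k λ_{kt} + 1[i = 1 and t > T_0]·τ_t + ε_{it}, where the unit-specific intercepts μ_{1i} and the common factor coefficients μ_2,…,μ_r are constants, the time factors λ_{kt} are arbitrary random variables, and ε_t := (ε_{1t},…,ε_{N+1,t}). Define the difference-in-differences estimator, for t ∈ 𝓑 ∪ {T_0+1,…,T}: τ̂_t := (Y_{1t} − (1/N)·Σ_{i=2}^{N+1} Y_{it}) − ((1/|𝓔|)·Σ_{s∈𝓔} Y_{1s} − (1/(N·|𝓔|))·Σ_{s∈𝓔} Σ_{i=2}^{N+1} Y_{is}). If τ_t = 0 for all t > T_0 and the ℝ^{N+1}-valued family (ε_t)_{t=1}^T is exchangeable, then the family (τ̂_t)_{t ∈ 𝓑 ∪ {T_0+1,…,T}} is exchangeable. 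-/
open MeasureTheory ProbabilityTheory
open scoped ENNReal NNReal

/-- In the interactive fixed effects model with parallel trends
(unit `0` of `N+1` units is treated; times are `Fin T`, 0-based, with blank periods
`B ⊆ {s < T0}`, training periods `E = {s < T0} \ B`, and post-treatment periods
`{s : T0 ≤ s}`), if the treatment effects vanish after `T0` and the error vectors
`(ε_t)_{t}` form an exchangeable family, then the difference-in-differences estimates
`τ̂_t` over the blank and post-treatment periods form an exchangeable family. -/
theorem stmt_8
    {Ω : Type*} [mΩ : MeasurableSpace Ω] (P : Measure Ω) [IsProbabilityMeasure P]
    (N T T0 r : ℕ) (hN : 1 ≤ N) (hT0 : 1 ≤ T0) (hT0T : T0 < T)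
    (B : Finset (Fin T)) (hB : ∀ s ∈ B, (s : ℕ) < T0)
    (E : Finset (Fin T)) (hE : E = (Finset.univ.filter (fun s : Fin T => (s : ℕ) < T0)) \ B)
    (hEne : E.Nonempty)
    (μ1 : Fin (N + 1) → ℝ) (μ : Fin r → ℝ)
    (lam : Fin r → Fin T → Ω → ℝ) (hlam : ∀ k s, Measurable (lam k s))
    (ε : Fin T → Ω → Fin (N + 1) → ℝ) (hε : ∀ s, Measurable (ε s))
    (τ : Fin T → ℝ) (hτ : ∀ s : Fin T, T0 ≤ (s : ℕ) → τ s = 0)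
    (Y : Fin (N + 1) → Fin T → Ω → ℝ)
    (hY : ∀ i s ω, Y i s ω = μ1 i + (∑ k, μ k * lam k s ω)
      + (if i = 0 ∧ T0 ≤ (s : ℕ) then τ s else 0) + ε s ω i)
    (hexch : Exchangeable P ε)
    (tauhat : Fin T → Ω → ℝ)
    (htauhat : ∀ s ω, tauhat s ω
      = (Y 0 s ω - (1 / (N : ℝ)) * ∑ i : Fin N, Y i.succ s ω)
        - ((1 / (E.card : ℝ)) * ∑ u ∈ E, Y 0 u ω
          - (1 / ((N : ℝ) * (E.card : ℝ))) * ∑ u ∈ E, ∑ i : Fin N, Y i.succ u ω)) :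
    Exchangeable P (fun s : {s : Fin T // s ∈ B ∨ T0 ≤ (s : ℕ)} => tauhat s.1) := by

  classical
  have hNne : (N : ℝ) ≠ 0 := Nat.cast_ne_zero.mpr (by omega)
  have hEcne : (E.card : ℝ) ≠ 0 := Nat.cast_ne_zero.mpr (Finset.card_ne_zero.mpr hEne)
  set q : Fin T → Prop := fun s => s ∈ B ∨ T0 ≤ (s : ℕ) with hq
  have hEq : ∀ u ∈ E, ¬ q u := by
    intro u hu
    rw [hE, Finset.mem_sdiff, Finset.mem_filter] at hu
    rintro (h | h)
    · exact hu.2 h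
    · omega
  set D : (Fin (N + 1) → ℝ) → ℝ := fun v => v 0 - (1 / (N : ℝ)) * ∑ i : Fin N, v i.succ
    with hD
  have hDmeas : Measurable D := by
    exact (measurable_pi_apply 0).sub
      (measurable_const.mul
        (Finset.measurable_sum Finset.univ fun i _ => measurable_pi_apply i.succ))
  -- unit-level difference
  have unit : ∀ t : Fin T, (¬ T0 ≤ (t : ℕ) ∨ τ t = 0) → ∀ ω,
      Y 0 t ω - (1 / (N : ℝ)) * ∑ i : Fin N, Y i.succ t ω
      = (μ1 0 - (1 / (N : ℝ)) * ∑ i : Fin N, μ1 i.succ) + D (ε t ω) := by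
    intro t ht ω
    have h0 : (if (0 : Fin (N + 1)) = 0 ∧ T0 ≤ (t : ℕ) then τ t else 0) = 0 := by
      rcases ht with h | h
      · simp [h]
      · simp [h]
    have hsum : ∑ i : Fin N, Y i.succ t ω
        = (∑ i : Fin N, μ1 i.succ) + (N : ℝ) * (∑ k, μ k * lam k t ω)
          + ∑ i : Fin N, ε t ω i.succ := by
      simp only [hY, Fin.succ_ne_zero, false_and, if_false, add_zero,
        Finset.sum_add_distrib, Finset.sum_const, Finset.card_univ, Fintype.card_fin,
        nsmul_eq_mul]
    rw [hY, h0, hsum, hD]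
    field_simp
    ring
  -- key algebraic identity
  have key : ∀ s : Fin T, q s → ∀ ω,
      tauhat s ω = D (ε s ω) - (1 / (E.card : ℝ)) * ∑ u ∈ E, D (ε u ω) := by
    intro s hs ω
    have hs' : ¬ T0 ≤ (s : ℕ) ∨ τ s = 0 := by
      rcases hs with h | h
      · left; have := hB s h; omega
      · right; exact hτ s h
    have havg : (1 / (E.card : ℝ)) * ∑ u ∈ E, Y 0 u ω
        - (1 / ((N : ℝ) * (E.card : ℝ))) * ∑ u ∈ E, ∑ i : Fin N, Y i.succ u ω
        = (1 / (E.card : ℝ)) * ∑ u ∈ E,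
            (Y 0 u ω - (1 / (N : ℝ)) * ∑ i : Fin N, Y i.succ u ω) := by
      simp only [Finset.mul_sum]
      rw [← Finset.sum_sub_distrib]
      apply Finset.sum_congr rfl
      intro u hu
      rw [mul_sub, Finset.mul_sum]
      congr 1
      apply Finset.sum_congr rfl
      intro i _
      rw [← mul_assoc, one_div_mul_one_div, mul_comm (E.card : ℝ) (N : ℝ)]
    have hsumE : ∑ u ∈ E, (Y 0 u ω - (1 / (N : ℝ)) * ∑ i : Fin N, Y i.succ u ω)
        = ∑ u ∈ E, ((μ1 0 - (1 / (N : ℝ)) * ∑ i : Fin N, μ1 i.succ) + D (ε u ω)) := by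
      apply Finset.sum_congr rfl
      intro u hu
      have hu' : ¬ T0 ≤ (u : ℕ) := by
        rw [hE, Finset.mem_sdiff, Finset.mem_filter] at hu
        omega
      exact unit u (Or.inl hu') ω
    rw [htauhat, havg, hsumE, unit s hs' ω, Finset.sum_add_distrib, Finset.sum_const,
      nsmul_eq_mul]
    field_simp
    ring
  -- the measurable post-processing map
  set G : (Fin T → (Fin (N + 1) → ℝ)) → ({s : Fin T // q s} → ℝ) :=
    fun e s => D (e s.1) - (1 / (E.card : ℝ)) * ∑ u ∈ E, D (e u) with hG
  have hGmeas : Measurable G := by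
    apply measurable_pi_lambda
    intro s
    apply ((hDmeas.comp (measurable_pi_apply _)).sub _)
    exact (Finset.measurable_sum _ fun u _ => hDmeas.comp (measurable_pi_apply _)).const_mul _
  intro π
  set π' : Equiv.Perm (Fin T) := π.extendDomain (Equiv.refl {s : Fin T // q s}) with hπ'
  have hπ'E : ∀ u ∈ E, π' u = u := fun u hu =>
    Equiv.Perm.extendDomain_apply_not_subtype π (Equiv.refl _) (hEq u hu)
  have hπ'S : ∀ s : {s : Fin T // q s}, π' s.1 = (π s).1 := by
    intro s
    have := Equiv.Perm.extendDomain_apply_subtype π (Equiv.refl {s : Fin T // q s}) s.2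
    simpa using this
  have hF : Measurable (fun ω => fun t : Fin T => ε (π' t) ω) :=
    measurable_pi_lambda _ fun t => hε (π' t)
  have hF0 : Measurable (fun ω => fun t : Fin T => ε t ω) :=
    measurable_pi_lambda _ fun t => hε t
  have hleft : (fun ω => fun s : {s : Fin T // q s} => tauhat (π s).1 ω)
      = G ∘ (fun ω => fun t : Fin T => ε (π' t) ω) := by
    funext ω
    funext s
    simp only [Function.comp_apply, hG]
    rw [key (π s).1 (π s).2 ω, hπ'S s]
    congr 1
    congr 1
    apply Finset.sum_congr rfl
    intro u hu
    rw [hπ'E u hu]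
  have hright : (fun ω => fun s : {s : Fin T // q s} => tauhat s.1 ω)
      = G ∘ (fun ω => fun t : Fin T => ε t ω) := by
    funext ω
    funext s
    simp only [Function.comp_apply, hG]
    rw [key s.1 s.2 ω]
  calc Measure.map (fun ω => fun s : {s : Fin T // q s} => tauhat (π s).1 ω) P
      = Measure.map G (Measure.map (fun ω => fun t : Fin T => ε (π' t) ω) P) := by
        rw [hleft, ← Measure.map_map hGmeas hF]
    _ = Measure.map G (Measure.map (fun ω => fun t : Fin T => ε t ω) P) := by
        rw [hexch π']
    _ = Measure.map (fun ω => fun s : {s : Fin T // q s} => tauhat s.1 ω) P := by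
        rw [hright, ← Measure.map_map hGmeas hF0]
end

section
/- Fix k ≥ 1. For every weight vector λ = (λ_1,…,λ_k) with λ_j ≥ 0 and Σ_{j=1}^k λ_j = 1, there exist numbers e^1,…,e^k ∈ {0,1} with max_j e^j = 1 and Σ_{j=1}^k λ_j·e^j ≤ 1/k, such that: if the candidate test martingales are defined by taking first factor e^j and all subsequent factors equal to 1 (so W_t^j = e^j for all t ≥ 1), and the mixture martingale by Ŵ_t := Π_{s=1}^t Σ_j λ_{s,j}·e_s^j with first-round weights λ_{1,·} = λ (so Ŵ_t = Σ_j λ_j e^j for all t ≥ 1), then max_{1≤j≤k} log W_t^j − log Ŵ_t ≥ log k for every t ≥ 1. Consequently, log k is the tightest uniform regret bound achievable by any strategy that forms predictable convex combinations of k candidate sequential e-values. -/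
open scoped BigOperators

/-- Extended-real logarithm, with `log x = -∞` for `x ≤ 0`. -/
noncomputable def elog (x : ℝ) : EReal := if x ≤ 0 then ⊥ else ((Real.log x : ℝ) : EReal)

/-!
Whatever the weights, some candidate `j₀` gets weight `λ_{j₀} ≤ 1/k` (they sum to `1`). Let only
that candidate pay out: `e = 𝟙_{j₀}`. Then the best candidate has wealth `1`, the mixture has
wealth `λ_{j₀} ≤ 1/k`, and the regret is `0 - log λ_{j₀} ≥ log k`.
-/

lemma elog_one : elog 1 = 0 := by
  simp [elog]

lemma elog_monotone : Monotone elog := by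
  intro x y hxy
  unfold elog
  split_ifs with hx hy hy
  · exact le_rfl
  · exact bot_le
  · linarith
  · exact EReal.coe_le_coe_iff.mpr (Real.log_le_log (not_le.mp hx) hxy)

lemma log_le_neg_elog_of_le_inv {c x : ℝ} (hx : x ≤ c⁻¹) :
    ((Real.log c : ℝ) : EReal) ≤ -elog x := by
  unfold elog
  split_ifs with hx0
  · simp
  · have hlog : Real.log x ≤ -Real.log c :=
      Real.log_inv c ▸ Real.log_le_log (not_le.mp hx0) hx
    rw [← EReal.coe_neg, EReal.coe_le_coe_iff]
    linarith

lemma Finset.sup'_elog_eq_zero {ι : Type*} {s : Finset ι} (hs : s.Nonempty) {f : ι → ℝ}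
    (hf : ∀ i ∈ s, f i ≤ 1) {i₀ : ι} (hi₀ : i₀ ∈ s) (hfi₀ : f i₀ = 1) :
    s.sup' hs (fun i => elog (f i)) = 0 := by
  apply le_antisymm
  · exact Finset.sup'_le hs _ fun i hi => elog_one ▸ elog_monotone (hf i hi)
  · exact elog_one ▸ hfi₀ ▸ Finset.le_sup' (fun i => elog (f i)) hi₀

lemma exists_le_inv_card_of_sum_eq_one {ι : Type*} [Fintype ι] [Nonempty ι] {w : ι → ℝ}
    (hw : ∑ i, w i = 1) : ∃ i, w i ≤ (Fintype.card ι : ℝ)⁻¹ := by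
  obtain ⟨i, -, hi⟩ := Finset.exists_le_of_sum_le (f := w) (g := fun _ => (Fintype.card ι : ℝ)⁻¹)
    Finset.univ_nonempty (by simp [hw])
  exact ⟨i, hi⟩

theorem stmt_13_general (k : ℕ) (hk : 1 ≤ k)
    (lam : Fin k → ℝ) (hlamsum : ∑ j, lam j = 1) :
    ∃ e : Fin k → ℝ,
      (∀ j, e j = 0 ∨ e j = 1) ∧ (∃ j, e j = 1) ∧ (∑ j, lam j * e j ≤ 1 / (k : ℝ)) ∧
      ∀ (W : ℕ → Fin k → ℝ) (Wmix : ℕ → ℝ),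
        (∀ t j, 1 ≤ t → W t j = e j) → (∀ t, 1 ≤ t → Wmix t = ∑ j, lam j * e j) →
        ∀ t : ℕ, 1 ≤ t →
          ((Real.log k : ℝ) : EReal) ≤
            (Finset.univ.sup'
                (Finset.univ_nonempty_iff.mpr (Fin.pos_iff_nonempty.mp hk))
                (fun j => elog (W t j)))
              - elog (Wmix t) := by
  have : Nonempty (Fin k) := Fin.pos_iff_nonempty.mp hk
  obtain ⟨j₀, hj₀⟩ := exists_le_inv_card_of_sum_eq_one hlamsum
  rw [Fintype.card_fin] at hj₀
  have hmix : ∑ j, lam j * (Pi.single j₀ 1 : Fin k → ℝ) j = lam j₀ := by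
    simp [Pi.single_apply]
  refine ⟨(Pi.single j₀ 1 : Fin k → ℝ), fun j => ?_, ⟨j₀, by simp⟩,
    by rw [hmix, one_div]; exact hj₀, fun W Wmix hW hWmix t ht => ?_⟩
  · rw [Pi.single_apply]
    split_ifs <;> simp
  have hbest : Finset.univ.sup' Finset.univ_nonempty (fun j => elog (W t j)) = 0 := by
    refine Finset.sup'_elog_eq_zero _ (fun j _ => ?_) (Finset.mem_univ j₀) (by simp [hW t j₀ ht])
    rw [hW t j ht, Pi.single_apply]
    split_ifs <;> norm_num
  rw [hbest, zero_sub, hWmix t ht, hmix]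
  exact log_le_neg_elog_of_le_inv hj₀

/-- For every convex weight vector `λ` over `k` candidates there are
first-round e-values `e^1,…,e^k ∈ {0,1}` with `max_j e^j = 1` and `Σ_j λ_j e^j ≤ 1/k`
such that, taking all subsequent e-value factors equal to `1` (so the candidate
martingales satisfy `W_t^j = e^j` and the mixture martingale satisfies
`Ŵ_t = Σ_j λ_j e^j` for all `t ≥ 1`), the regret satisfies
`max_j log W_t^j − log Ŵ_t ≥ log k` for every `t ≥ 1` (in extended reals, with
`log 0 = −∞`). Hence `log k` is the tightest uniform regret bound for predictable
convex-combination strategies. -/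
theorem stmt_13 (k : ℕ) (hk : 1 ≤ k)
    (lam : Fin k → ℝ) (hlamnn : ∀ j, 0 ≤ lam j) (hlamsum : ∑ j, lam j = 1) :
    ∃ e : Fin k → ℝ,
      (∀ j, e j = 0 ∨ e j = 1) ∧ (∃ j, e j = 1) ∧ (∑ j, lam j * e j ≤ 1 / (k : ℝ)) ∧
      ∀ (W : ℕ → Fin k → ℝ) (Wmix : ℕ → ℝ),
        (∀ t j, 1 ≤ t → W t j = e j) → (∀ t, 1 ≤ t → Wmix t = ∑ j, lam j * e j) →
        ∀ t : ℕ, 1 ≤ t →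
          ((Real.log k : ℝ) : EReal) ≤
            (Finset.univ.sup'
                (Finset.univ_nonempty_iff.mpr (Fin.pos_iff_nonempty.mp hk))
                (fun j => elog (W t j)))
              - elog (Wmix t) :=
  stmt_13_general k hk lam hlamsum
end
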